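/- The map $X \mapsto \operatorname{Tr}\sqrt{X}$ is subadditive on positive semidefinite operators: for all positive semidefinite operators $X, Y$ on a finite-dimensional Hilbert space, $\operatorname{Tr}\sqrt{X+Y} \le \operatorname{Tr}\sqrt{X} + \operatorname{Tr}\sqrt{Y}$. -/

import Mathlib

open Matrix
open scoped ComplexOrder

/-- The square root of a positive semidefinite matrix, as defined in the older Mathlib
(removed since). -/
noncomputable def Matrix.PosSemidef.sqrt {n : Type*} {𝕜 : Type*} [Fintype n] [RCLike 𝕜]
    [DecidableEq n] {A : Matrix n n 𝕜} (hA : A.PosSemidef) : Matrix n n 𝕜 :=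
  hA.1.eigenvectorUnitary.1 * diagonal ((↑) ∘ (√·) ∘ hA.1.eigenvalues) *
    (star hA.1.eigenvectorUnitary : Matrix n n 𝕜)

noncomputable def matAbs {m : ℕ} (A : Matrix (Fin m) (Fin m) ℂ) : Matrix (Fin m) (Fin m) ℂ :=
  (Matrix.posSemidef_conjTranspose_mul_self A).sqrt

noncomputable def traceNorm {m : ℕ} (A : Matrix (Fin m) (Fin m) ℂ) : ℝ :=
  ((matAbs A).trace).re

open Classical in
noncomputable def psdSqrt {m : ℕ} (A : Matrix (Fin m) (Fin m) ℂ) : Matrix (Fin m) (Fin m) ℂ :=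
  if h : A.PosSemidef then h.sqrt else 0

noncomputable def fid {m : ℕ} (A B : Matrix (Fin m) (Fin m) ℂ) : ℝ :=
  traceNorm (psdSqrt A * psdSqrt B)

noncomputable def matPosPart {m : ℕ} (A : Matrix (Fin m) (Fin m) ℂ) : Matrix (Fin m) (Fin m) ℂ :=
  (2⁻¹ : ℂ) • (matAbs A + A)

noncomputable def matNegPart {m : ℕ} (A : Matrix (Fin m) (Fin m) ℂ) : Matrix (Fin m) (Fin m) ℂ :=
  (2⁻¹ : ℂ) • (matAbs A - A)

/-!
Let `W` be the pseudo-inverse of `√(X + Y)`, so that `√(X + Y) = W (X + Y)` and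
`W (X + Y) W ≤ 1`. Then `Tr √(X + Y) = Re Tr (W X) + Re Tr (W Y)`. Since `W X W ≤ 1`, the matrix
`K = √X W` is a contraction, and `Re Tr (W X) = Re Tr (√X K) ≤ Tr √X` because the trace of a
positive semidefinite matrix times a contraction is bounded by its trace; likewise for `Y`.
-/

open scoped MatrixOrder

namespace Matrix

variable {n 𝕜 : Type*} [Fintype n] [RCLike 𝕜] [DecidableEq n]

theorem continuousOn_real_spectrum (A : Matrix n n 𝕜) (f : ℝ → ℝ) :
    ContinuousOn f (spectrum ℝ A) :=
  A.finite_real_spectrum.continuousOn f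

namespace PosSemidef

variable {A : Matrix n n 𝕜} (hA : A.PosSemidef)
include hA

theorem sqrt_eq_cfc : hA.sqrt = cfc Real.sqrt A := by
  rw [hA.1.cfc_eq]
  rfl

theorem posSemidef_sqrt : hA.sqrt.PosSemidef := by
  rw [hA.sqrt_eq_cfc]
  exact (cfc_nonneg fun x _ => Real.sqrt_nonneg x).posSemidef

theorem sqrt_mul_self : hA.sqrt * hA.sqrt = A := by
  rw [hA.sqrt_eq_cfc,
    ← cfc_mul _ _ A (A.continuousOn_real_spectrum _) (A.continuousOn_real_spectrum _)]
  conv_rhs => rw [← cfc_id' ℝ A hA.isHermitian.isSelfAdjoint]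
  exact cfc_congr fun x hx => Real.mul_self_sqrt (spectrum_nonneg_of_nonneg hA.nonneg hx)

end PosSemidef

-- Expand `0 ≤ (S - S Kᴴ)(Sᴴ - K Sᴴ)` and bound `S Kᴴ K Sᴴ ≤ S Sᴴ`: this gives
-- `2 Re Tr (S K Sᴴ) ≤ 2 Tr (S Sᴴ)` for `A = Sᴴ S`.
theorem re_trace_mul_le_re_trace_of_star_mul_self_le_one {A K : Matrix n n 𝕜}
    (hA : A.PosSemidef) (hK : star K * K ≤ 1) :
    RCLike.re (A * K).trace ≤ RCLike.re A.trace := by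
  obtain ⟨S, rfl⟩ := CStarAlgebra.nonneg_iff_eq_star_mul_self.mp hA.nonneg
  have hconj : S * (star K * K) * star S ≤ S * star S := by
    simpa using star_right_conjugate_le_conjugate hK S
  have hnonneg : 0 ≤ S * (1 - K) * star S + star (S * (1 - K) * star S) := by
    have : star (star S - K * star S) * (star S - K * star S) +
        (S * star S - S * (star K * K) * star S) =
        S * (1 - K) * star S + star (S * (1 - K) * star S) := by
      simp only [star_mul, star_sub, star_one, star_star]; noncomm_ring
    rw [← this]
    exact add_nonneg (star_mul_self_nonneg _) (sub_nonneg.mpr hconj)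
  have htr := (RCLike.nonneg_iff.mp hnonneg.posSemidef.trace_nonneg).1
  simp only [trace_add, star_eq_conjTranspose, trace_conjTranspose, map_add, RCLike.star_def,
    RCLike.conj_re, mul_sub, sub_mul, mul_one, trace_sub, map_sub] at htr
  rw [trace_mul_cycle, trace_mul_comm, ← star_eq_conjTranspose] at htr
  linarith

theorem PosSemidef.re_trace_mul_le_re_trace_sqrt {A W : Matrix n n 𝕜} (hA : A.PosSemidef)
    (hW : IsSelfAdjoint W) (hWAW : W * A * W ≤ 1) :
    RCLike.re (W * A).trace ≤ RCLike.re hA.sqrt.trace := by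
  set S := hA.sqrt
  have hS : IsSelfAdjoint S := hA.posSemidef_sqrt.isHermitian.isSelfAdjoint
  rw [← hA.sqrt_mul_self, trace_mul_comm, mul_assoc]
  refine re_trace_mul_le_re_trace_of_star_mul_self_le_one hA.posSemidef_sqrt ?_
  rwa [star_mul, hS.star_eq, hW.star_eq, ← mul_assoc,
    mul_assoc W, hA.sqrt_mul_self]

-- As `(√x)⁻¹ = 0` for `x ≤ 0`, this is the pseudo-inverse of `√A`, and
-- `pinvSqrt A * A = √A` holds without any invertibility assumption.
noncomputable def pinvSqrt (A : Matrix n n 𝕜) : Matrix n n 𝕜 :=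
  cfc (fun x : ℝ => (√x)⁻¹) A

theorem isSelfAdjoint_pinvSqrt (A : Matrix n n 𝕜) : IsSelfAdjoint (pinvSqrt A) :=
  cfc_predicate _ A

theorem pinvSqrt_mul_self {A : Matrix n n 𝕜} (hA : A.IsHermitian) :
    pinvSqrt A * A = cfc Real.sqrt A := by
  nth_rw 2 [← cfc_id' ℝ A hA.isSelfAdjoint]
  rw [pinvSqrt, ← cfc_mul _ _ A (A.continuousOn_real_spectrum _) (A.continuousOn_real_spectrum _)]
  refine cfc_congr fun x _ => ?_
  rcases le_or_gt x 0 with hx | hx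
  · simp [Real.sqrt_eq_zero'.mpr hx]
  · rw [inv_mul_eq_div, Real.div_sqrt]

theorem pinvSqrt_mul_self_mul_pinvSqrt_le_one {A : Matrix n n 𝕜} (hA : A.IsHermitian) :
    pinvSqrt A * A * pinvSqrt A ≤ 1 := by
  rw [pinvSqrt_mul_self hA, pinvSqrt,
    ← cfc_mul _ _ A (A.continuousOn_real_spectrum _) (A.continuousOn_real_spectrum _)]
  exact cfc_le_one _ A fun x _ => mul_inv_le_one

end Matrix

theorem trace_sqrt_subadditive {d : ℕ} (X Y : Matrix (Fin d) (Fin d) ℂ)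
    (hX : X.PosSemidef) (hY : Y.PosSemidef) :
    (((hX.add hY).sqrt).trace).re ≤ ((hX.sqrt).trace).re + ((hY.sqrt).trace).re := by
  set W := pinvSqrt (X + Y)
  have hW : IsSelfAdjoint W := isSelfAdjoint_pinvSqrt _
  have hWZW : W * (X + Y) * W ≤ 1 :=
    pinvSqrt_mul_self_mul_pinvSqrt_le_one (hX.add hY).isHermitian
  have hWXW : W * X * W ≤ 1 :=
    (IsSelfAdjoint.conjugate_le_conjugate (le_add_of_nonneg_right hY.nonneg) hW).trans hWZW
  have hWYW : W * Y * W ≤ 1 :=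
    (IsSelfAdjoint.conjugate_le_conjugate (le_add_of_nonneg_left hX.nonneg) hW).trans hWZW
  calc (((hX.add hY).sqrt).trace).re
      = (W * X).trace.re + (W * Y).trace.re := by
        rw [(hX.add hY).sqrt_eq_cfc, ← pinvSqrt_mul_self (hX.add hY).isHermitian, mul_add,
          trace_add, Complex.add_re]
    _ ≤ ((hX.sqrt).trace).re + ((hY.sqrt).trace).re :=
        add_le_add (hX.re_trace_mul_le_re_trace_sqrt hW hWXW)
          (hY.re_trace_mul_le_re_trace_sqrt hW hWYW)
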